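/- Let Σ = B_n in ℝ^n and Θ a union of d chains of simple roots α_i = e_i − e_{i+1}, each chain of length m ≥ 1 (blocks of m+1 consecutive indices), with consecutive blocks separated by exactly one simple root not in Θ and n = d(m+1) (so e_n ∉ span Θ direction, i.e. α_n = e_n ∉ Θ). Let u_1, …, u_d be the block averages. Then the nonzero projections of the roots of B_n onto (span Θ)^⊥ contain the set {±u_i ± u_j (i<j), ±u_i, ±2u_i}, which is a non-reduced root system of type BC_d of rank d. -/

import Mathlib

open scoped RealInnerProductSpace

/-!
Telescoping along the chain of simple roots of `Θ` in the `r`-th block shows that each `e k` of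
that block differs from the block average `u r` by an element of `span Θ`, while `u r` is
orthogonal to `Θ`. So the projection onto `(span Θ)ᗮ` sends every `e k` of block `r` to `u r`, and
`±u r`, `±2 • u r` (the image of `±(e k + e (k + 1))`, which needs `m ≥ 1`) and `±u r ± u s` are
projections of roots of `B_n`.

The rest holds for any orthogonal family `u` of common squared norm `c ≠ 0`. Writing the roots of
`BC_d` as `a • u r` with `a ∣ 2` and `a • u r + b • u s` with units `a b : ℤ`, the reflection in a
root permutes the `u t` up to sign (in the second case it swaps `u r` and `u s` up to the sign
`-a * b`), and such signed permutations preserve these two shapes. The Cartan numbers are integers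
because `⟪x, u t⟫` is an integer multiple of `c` for every root `x`.
-/

theorem Int.eq_one_or_neg_one_or_two_or_neg_two_of_dvd_two {a : ℤ} (h : a ∣ 2) :
    a = 1 ∨ a = -1 ∨ a = 2 ∨ a = -2 := by
  have h₁ := Int.le_of_dvd two_pos h
  have h₂ := Int.le_of_dvd two_pos (neg_dvd.2 h)
  have h₀ : a ≠ 0 := by rintro rfl; norm_num at h
  omega

theorem Int.cast_sq_eq_one_of_isUnit {a : ℤ} (ha : IsUnit a) : (a : ℝ) ^ 2 = 1 := by
  exact_mod_cast Int.isUnit_sq ha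

theorem Nat.mul_add_lt_mul {r d i m : ℕ} (hr : r < d) (hi : i < m) : r * m + i < d * m := by
  nlinarith

theorem Nat.eq_and_eq_of_mul_add_eq {r s i j m : ℕ} (hi : i < m) (hj : j < m)
    (h : r * m + i = s * m + j) : r = s ∧ i = j := by
  have hpos : 0 < m := by omega
  obtain ⟨hr, hi'⟩ := (Nat.div_mod_unique hpos).2 ⟨(by ring : i + m * r = r * m + i), hi⟩
  obtain ⟨hs, hj'⟩ :=
    (Nat.div_mod_unique hpos).2 ⟨(by rw [h]; ring : j + m * s = r * m + i), hj⟩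
  exact ⟨hr.symm.trans hs, hi'.symm.trans hj'⟩

theorem sub_smul_sum_range_mem_span {K M : Type*} [DivisionRing K] [CharZero K] [AddCommGroup M]
    [Module K M] (f : ℕ → M) {k i : ℕ} (hi : i ≤ k) :
    f i - ((k : K) + 1)⁻¹ • ∑ j ∈ Finset.range (k + 1), f j ∈
      Submodule.span K {x | ∃ j < k, x = f j - f (j + 1)} := by
  set S := Submodule.span K {x | ∃ j < k, x = f j - f (j + 1)}
  have hfirst : ∀ j ≤ k, f 0 - f j ∈ S := by
    intro j
    induction j with
    | zero => simp
    | succ j ih =>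
      intro hj
      rw [← sub_add_sub_cancel _ (f j)]
      exact add_mem (ih (by omega)) (Submodule.subset_span ⟨j, hj, rfl⟩)
  have hpair : ∀ j ≤ k, f i - f j ∈ S := fun j hj => by
    simpa using sub_mem (hfirst j hj) (hfirst i hi)
  have havg : f i - ((k : K) + 1)⁻¹ • ∑ j ∈ Finset.range (k + 1), f j =
      ((k : K) + 1)⁻¹ • ∑ j ∈ Finset.range (k + 1), (f i - f j) := by
    rw [Finset.sum_sub_distrib, Finset.sum_const, Finset.card_range, smul_sub,
      ← Nat.cast_smul_eq_nsmul K, smul_smul]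
    push_cast
    rw [inv_mul_cancel₀ k.cast_add_one_ne_zero, one_smul]
  rw [havg]
  exact Submodule.smul_mem _ _ (Submodule.sum_mem _ fun j hj =>
    hpair j (Nat.lt_succ_iff.1 (Finset.mem_range.1 hj)))

section RootSets

variable {M : Type*} [AddCommGroup M] [Module ℝ M] {u e : ℕ → M} {d m : ℕ}

def bcRoots (u : ℕ → M) (d : ℕ) : Set M :=
  {x | (∃ r, r < d ∧
        (x = u r ∨ x = -u r ∨ x = (2 : ℝ) • u r ∨ x = -((2 : ℝ) • u r))) ∨
      (∃ r s, r < s ∧ s < d ∧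
        (x = u r + u s ∨ x = u r - u s ∨ x = -u r + u s ∨ x = -u r - u s))}

theorem mem_bcRoots_iff {x : M} :
    x ∈ bcRoots u d ↔ (∃ r < d, ∃ a : ℤ, a ∣ 2 ∧ x = (a : ℝ) • u r) ∨
      ∃ r < d, ∃ s < d, r ≠ s ∧
        ∃ a b : ℤ, IsUnit a ∧ IsUnit b ∧ x = (a : ℝ) • u r + (b : ℝ) • u s := by
  constructor
  · rintro (⟨r, hr, rfl | rfl | rfl | rfl⟩ | ⟨r, s, hrs, hs, rfl | rfl | rfl | rfl⟩)
    · exact Or.inl ⟨r, hr, 1, one_dvd _, by simp⟩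
    · exact Or.inl ⟨r, hr, -1, by norm_num, by simp⟩
    · exact Or.inl ⟨r, hr, 2, dvd_rfl, by simp⟩
    · exact Or.inl ⟨r, hr, -2, by norm_num, by simp⟩
    all_goals refine Or.inr ⟨r, hrs.trans hs, s, hs, hrs.ne, ?_⟩
    · exact ⟨1, 1, isUnit_one, isUnit_one, by simp⟩
    · exact ⟨1, -1, isUnit_one, isUnit_one.neg, by simp [sub_eq_add_neg]⟩
    · exact ⟨-1, 1, isUnit_one.neg, isUnit_one, by simp⟩
    · exact ⟨-1, -1, isUnit_one.neg, isUnit_one.neg, by simp [sub_eq_add_neg]⟩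
  · rintro (⟨r, hr, a, ha, rfl⟩ | ⟨r, hr, s, hs, hrs, a, b, ha, hb, rfl⟩)
    · refine Or.inl ⟨r, hr, ?_⟩
      rcases Int.eq_one_or_neg_one_or_two_or_neg_two_of_dvd_two ha with rfl | rfl | rfl | rfl <;>
        simp
    · right
      rcases Int.isUnit_iff.1 ha with rfl | rfl <;> rcases Int.isUnit_iff.1 hb with rfl | rfl <;>
        rcases hrs.lt_or_gt with h | h
      all_goals first
        | exact ⟨r, s, h, hs, by simp [sub_eq_add_neg]⟩
        | exact ⟨s, r, h, hr, by simp [sub_eq_add_neg, add_comm]⟩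

theorem mapsTo_bcRoots (f : M →ₗ[ℝ] M) {σ : ℕ → ℕ} {ε : ℕ → ℤ}
    (hσ : Set.MapsTo σ (Set.Iio d) (Set.Iio d)) (hσ_inj : Set.InjOn σ (Set.Iio d))
    (hε : ∀ t < d, IsUnit (ε t)) (hf : ∀ t < d, f (u t) = (ε t : ℝ) • u (σ t)) :
    Set.MapsTo f (bcRoots u d) (bcRoots u d) := by
  intro x hx
  rw [mem_bcRoots_iff] at hx ⊢
  rcases hx with ⟨r, hr, a, ha, rfl⟩ | ⟨r, hr, s, hs, hrs, a, b, ha, hb, rfl⟩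
  · refine Or.inl ⟨σ r, hσ hr, a * ε r, (hε r hr).mul_right_dvd.2 ha, ?_⟩
    rw [map_smul, hf r hr, smul_smul, Int.cast_mul]
  · refine Or.inr ⟨σ r, hσ hr, σ s, hσ hs, fun h => hrs (hσ_inj hr hs h),
      a * ε r, b * ε s, ha.mul (hε r hr), hb.mul (hε s hs), ?_⟩
    rw [map_add, map_smul, map_smul, hf r hr, hf s hs, smul_smul, smul_smul, Int.cast_mul,
      Int.cast_mul]

theorem span_bcRoots :
    Submodule.span ℝ (bcRoots u d) = Submodule.span ℝ (Set.range fun r : Fin d => u r) := by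
  have hmem : ∀ r < d, u r ∈ Submodule.span ℝ (Set.range fun r : Fin d => u r) :=
    fun r hr => Submodule.subset_span ⟨⟨r, hr⟩, rfl⟩
  refine le_antisymm (Submodule.span_le.2 fun x hx => ?_) (Submodule.span_mono ?_)
  · rcases mem_bcRoots_iff.1 hx with
      ⟨r, hr, a, -, rfl⟩ | ⟨r, hr, s, hs, -, a, b, -, -, rfl⟩
    · exact Submodule.smul_mem _ _ (hmem r hr)
    · exact add_mem (Submodule.smul_mem _ _ (hmem r hr)) (Submodule.smul_mem _ _ (hmem s hs))
  · rintro _ ⟨r, rfl⟩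
    exact Or.inl ⟨r, r.2, Or.inl rfl⟩

def bRoots (e : ℕ → M) (n : ℕ) : Set M :=
  {x | (∃ i, i < n ∧ (x = e i ∨ x = -e i)) ∨
      (∃ i j, i < j ∧ j < n ∧
        (x = e i + e j ∨ x = e i - e j ∨ x = -e i + e j ∨ x = -e i - e j))}

noncomputable def blockAverage (e : ℕ → M) (m r : ℕ) : M :=
  ((m : ℝ) + 1)⁻¹ • ∑ i ∈ Finset.range (m + 1), e (r * (m + 1) + i)

def chainRoots (e : ℕ → M) (d m : ℕ) : Set M :=
  {x | ∃ r i, r < d ∧ i < m ∧ x = e (r * (m + 1) + i) - e (r * (m + 1) + i + 1)}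

theorem sub_blockAverage_mem_span_chainRoots {r i : ℕ} (hr : r < d) (hi : i ≤ m) :
    e (r * (m + 1) + i) - blockAverage e m r ∈ Submodule.span ℝ (chainRoots e d m) := by
  refine Submodule.span_mono ?_ (sub_smul_sum_range_mem_span (fun j => e (r * (m + 1) + j)) hi)
  rintro _ ⟨j, hj, rfl⟩
  exact ⟨r, j, hr, hj, rfl⟩

theorem bcRoots_subset_image_bRoots (hm : 1 ≤ m) (P : M →ₗ[ℝ] M)
    (hP : ∀ r < d, ∀ i ≤ m, P (e (r * (m + 1) + i)) = u r) :
    bcRoots u d ⊆ P '' bRoots e (d * (m + 1)) := by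
  have hP₀ : ∀ r < d, P (e (r * (m + 1))) = u r := fun r hr => by
    simpa using hP r hr 0 (Nat.zero_le m)
  have hlt : ∀ {r s}, r < s → r * (m + 1) < s * (m + 1) := fun h =>
    Nat.mul_lt_mul_of_pos_right h m.succ_pos
  rintro x (⟨r, hr, hx⟩ | ⟨r, s, hrs, hs, hx⟩)
  · have hk₁ := Nat.mul_add_lt_mul hr (Nat.lt_succ_of_le hm)
    rcases hx with rfl | rfl | rfl | rfl
    · exact ⟨_, Or.inl ⟨_, hlt hr, Or.inl rfl⟩, hP₀ r hr⟩
    · exact ⟨_, Or.inl ⟨_, hlt hr, Or.inr rfl⟩, by simp [hP₀ r hr]⟩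
    · exact ⟨_, Or.inr ⟨_, _, Nat.lt_succ_self _, hk₁, Or.inl rfl⟩,
        by simp [hP₀ r hr, hP r hr 1 hm, two_smul]⟩
    · exact ⟨_, Or.inr ⟨_, _, Nat.lt_succ_self _, hk₁, Or.inr (Or.inr (Or.inr rfl))⟩,
        by simp [hP₀ r hr, hP r hr 1 hm, two_smul]; abel⟩
  · have hPr := hP₀ r (hrs.trans hs)
    have hPs := hP₀ s hs
    rcases hx with rfl | rfl | rfl | rfl
    · exact ⟨_, Or.inr ⟨_, _, hlt hrs, hlt hs, Or.inl rfl⟩, by simp [hPr, hPs]⟩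
    · exact ⟨_, Or.inr ⟨_, _, hlt hrs, hlt hs, Or.inr (Or.inl rfl)⟩, by simp [hPr, hPs]⟩
    · exact ⟨_, Or.inr ⟨_, _, hlt hrs, hlt hs, Or.inr (Or.inr (Or.inl rfl))⟩,
        by simp [hPr, hPs]⟩
    · exact ⟨_, Or.inr ⟨_, _, hlt hrs, hlt hs, Or.inr (Or.inr (Or.inr rfl))⟩,
        by simp [hPr, hPs]⟩

end RootSets

section Orthogonal

variable {E : Type*} [NormedAddCommGroup E] [InnerProductSpace ℝ E] {u : ℕ → E} {d : ℕ}
  {c : ℝ} {x y : E}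

def IsOrthogonalWithSqNorm (u : ℕ → E) (d : ℕ) (c : ℝ) : Prop :=
  ∀ r < d, ∀ s < d, ⟪u r, u s⟫ = if r = s then c else 0

noncomputable def rootReflection (x : E) : E →ₗ[ℝ] E :=
  Module.preReflection x ((2 / ⟪x, x⟫) • innerₗ E x)

theorem rootReflection_apply (x y : E) :
    rootReflection x y = y - (2 * ⟪y, x⟫ / ⟪x, x⟫) • x := by
  simp [rootReflection, Module.preReflection_apply, real_inner_comm x y, mul_div_right_comm]

theorem rootReflection_smul_apply (hu : IsOrthogonalWithSqNorm u d c)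
    (hc : c ≠ 0) {r t : ℕ} (hr : r < d) (ht : t < d) {a : ℝ} (ha : a ≠ 0) :
    rootReflection (a • u r) (u t) = if t = r then -u r else u t := by
  rw [rootReflection_apply]
  split_ifs with htr
  · subst htr
    simp only [real_inner_smul_left, real_inner_smul_right, hu t ht t ht, ↓reduceIte]
    rw [show 2 * (a * c) / (a * (a * c)) = 2 / a by field_simp, smul_smul,
      div_mul_cancel₀ _ ha]
    module
  · simp [real_inner_smul_right, hu t ht r hr, htr]

theorem inner_self_smul_add_smul (hu : IsOrthogonalWithSqNorm u d c) {r s : ℕ} (hr : r < d)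
    (hs : s < d) (hrs : r ≠ s) {a b : ℝ} (ha : a ^ 2 = 1) (hb : b ^ 2 = 1) :
    ⟪a • u r + b • u s, a • u r + b • u s⟫ = 2 * c := by
  simp only [inner_add_left, inner_add_right, real_inner_smul_left, real_inner_smul_right,
    hu r hr r hr, hu r hr s hs, hu s hs r hr, hu s hs s hs, ↓reduceIte, if_neg hrs,
    if_neg (Ne.symm hrs)]
  linear_combination c * (ha + hb)

theorem rootReflection_add_apply (hu : IsOrthogonalWithSqNorm u d c)
    (hc : c ≠ 0) {r s t : ℕ} (hr : r < d) (hs : s < d) (hrs : r ≠ s) (ht : t < d) {a b : ℝ}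
    (ha : a ^ 2 = 1) (hb : b ^ 2 = 1) :
    rootReflection (a • u r + b • u s) (u t) =
      (if t = r ∨ t = s then -(a * b) else 1) • u (Equiv.swap r s t) := by
  rw [rootReflection_apply, inner_self_smul_add_smul hu hr hs hrs ha hb]
  by_cases htr : t = r
  · subst htr
    simp only [inner_add_right, real_inner_smul_right, hu t ht t ht, hu t ht s hs, ↓reduceIte,
      if_neg hrs, mul_zero, add_zero, true_or, Equiv.swap_apply_left]
    rw [show 2 * (a * c) / (2 * c) = a by field_simp]
    linear_combination (norm := module) -ha • u t
  by_cases hts : t = s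
  · subst hts
    simp only [inner_add_right, real_inner_smul_right, hu t ht t ht, hu t ht r hr, ↓reduceIte,
      if_neg htr, mul_zero, zero_add, or_true, Equiv.swap_apply_right]
    rw [show 2 * (b * c) / (2 * c) = b by field_simp]
    linear_combination (norm := module) -hb • u t
  · simp [inner_add_right, real_inner_smul_right, hu t ht r hr, hu t ht s hs, htr, hts,
      Equiv.swap_apply_of_ne_of_ne]

theorem mapsTo_rootReflection_bcRoots (hu : IsOrthogonalWithSqNorm u d c) (hc : c ≠ 0)
    (hx : x ∈ bcRoots u d) : Set.MapsTo (rootReflection x) (bcRoots u d) (bcRoots u d) := by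
  rcases mem_bcRoots_iff.1 hx with
    ⟨r, hr, a, ha, rfl⟩ | ⟨r, hr, s, hs, hrs, a, b, ha, hb, rfl⟩
  · have ha₀ : (a : ℝ) ≠ 0 := by exact_mod_cast ne_zero_of_dvd_ne_zero two_ne_zero ha
    refine mapsTo_bcRoots _ (σ := id) (ε := fun t => if t = r then -1 else 1)
      (fun t ht => ht) (Set.injOn_id _) (fun t _ => by split_ifs <;> simp) fun t ht => ?_
    rw [rootReflection_smul_apply hu hc hr ht ha₀]
    split_ifs with htr <;> simp [htr]
  · refine mapsTo_bcRoots _ (σ := Equiv.swap r s)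
      (ε := fun t => if t = r ∨ t = s then -(a * b) else 1) (fun t ht => ?_)
      (Equiv.swap r s).injective.injOn (fun t _ => ?_) fun t ht => ?_
    · rw [Equiv.swap_apply_def]
      split_ifs <;> assumption
    · split_ifs
      exacts [(ha.mul hb).neg, isUnit_one]
    · rw [rootReflection_add_apply hu hc hr hs hrs ht (Int.cast_sq_eq_one_of_isUnit ha)
        (Int.cast_sq_eq_one_of_isUnit hb)]
      push_cast
      rfl

theorem exists_int_inner_eq_mul (hu : IsOrthogonalWithSqNorm u d c)
    (hx : x ∈ bcRoots u d) {t : ℕ} (ht : t < d) : ∃ k : ℤ, ⟪x, u t⟫ = k * c := by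
  rcases mem_bcRoots_iff.1 hx with ⟨r, hr, a, -, rfl⟩ | ⟨r, hr, s, hs, -, a, b, -, -, rfl⟩
  · refine ⟨if r = t then a else 0, ?_⟩
    rw [real_inner_smul_left, hu r hr t ht]
    split_ifs <;> simp
  · refine ⟨(if r = t then a else 0) + (if s = t then b else 0), ?_⟩
    rw [inner_add_left, real_inner_smul_left, real_inner_smul_left, hu r hr t ht, hu s hs t ht]
    split_ifs <;> push_cast <;> ring

theorem exists_int_two_mul_inner_div_inner_self (hu : IsOrthogonalWithSqNorm u d c)
    (hc : c ≠ 0) (hx : x ∈ bcRoots u d) (hy : y ∈ bcRoots u d) :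
    ∃ z : ℤ, 2 * ⟪x, y⟫ / ⟪y, y⟫ = z := by
  rcases mem_bcRoots_iff.1 hy with
    ⟨s, hs, b, ⟨q, hq⟩, rfl⟩ | ⟨r, hr, s, hs, hrs, a, b, ha, hb, rfl⟩
  · obtain ⟨k, hk⟩ := exists_int_inner_eq_mul hu hx hs
    have hq' : (2 : ℝ) = b * q := by exact_mod_cast hq
    have hb : (b : ℝ) ≠ 0 := by rintro h; rw [h, zero_mul] at hq'; norm_num at hq'
    refine ⟨q * k, ?_⟩
    rw [real_inner_smul_right, real_inner_smul_left, real_inner_smul_right, hk, hu s hs s hs,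
      if_pos rfl, hq']
    push_cast
    field_simp
  · obtain ⟨k, hk⟩ := exists_int_inner_eq_mul hu hx hr
    obtain ⟨l, hl⟩ := exists_int_inner_eq_mul hu hx hs
    refine ⟨a * k + b * l, ?_⟩
    rw [inner_self_smul_add_smul hu hr hs hrs (Int.cast_sq_eq_one_of_isUnit ha)
      (Int.cast_sq_eq_one_of_isUnit hb), inner_add_right, real_inner_smul_right,
      real_inner_smul_right, hk, hl]
    push_cast
    field_simp

theorem ne_zero_of_mem_bcRoots (hu : IsOrthogonalWithSqNorm u d c)
    (hc : c ≠ 0) (hx : x ∈ bcRoots u d) : x ≠ 0 := by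
  rintro rfl
  rcases mem_bcRoots_iff.1 hx with ⟨r, hr, a, ha, h⟩ | ⟨r, hr, s, hs, hrs, a, b, ha, -, h⟩
  · have ha₀ : (a : ℝ) ≠ 0 := by exact_mod_cast ne_zero_of_dvd_ne_zero two_ne_zero ha
    have := congrArg (⟪·, u r⟫) h
    simp only [inner_zero_left, real_inner_smul_left, hu r hr r hr, ↓reduceIte] at this
    exact mul_ne_zero ha₀ hc this.symm
  · have ha₀ : (a : ℝ) ≠ 0 := by exact_mod_cast ha.ne_zero
    have := congrArg (⟪·, u r⟫) h
    simp only [inner_zero_left, inner_add_left, real_inner_smul_left, hu r hr r hr,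
      hu s hs r hr, ↓reduceIte, if_neg (Ne.symm hrs), mul_zero, add_zero] at this
    exact mul_ne_zero ha₀ hc this.symm

theorem finrank_span_bcRoots (hu : IsOrthogonalWithSqNorm u d c)
    (hc : c ≠ 0) : Module.finrank ℝ (Submodule.span ℝ (bcRoots u d)) = d := by
  rw [span_bcRoots, finrank_span_eq_card, Fintype.card_fin]
  apply linearIndependent_of_ne_zero_of_inner_eq_zero
  · intro r h
    have := hu r r.2 r r.2
    rw [h, inner_zero_left, if_pos rfl] at this
    exact hc this.symm
  · intro r s hrs
    rw [hu r r.2 s s.2, if_neg (Fin.val_injective.ne hrs)]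

end Orthogonal

section Blocks

variable {E : Type*} [NormedAddCommGroup E] [InnerProductSpace ℝ E] {e : ℕ → E} {d m : ℕ}

theorem inner_blockAverage (he : Orthonormal ℝ fun i : Fin (d * (m + 1)) => e i)
    {r s j : ℕ} (hs : s < d) (hj : j ≤ m) (hr : r < d) :
    ⟪e (s * (m + 1) + j), blockAverage e m r⟫ = if s = r then ((m : ℝ) + 1)⁻¹ else 0 := by
  have hterm : ∀ i ∈ Finset.range (m + 1),
      ⟪e (s * (m + 1) + j), e (r * (m + 1) + i)⟫ = if s = r ∧ j = i then 1 else 0 := by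
    intro i hi
    have hi := Finset.mem_range.1 hi
    have := orthonormal_iff_ite.1 he ⟨_, Nat.mul_add_lt_mul hs (Nat.lt_succ_of_le hj)⟩
      ⟨_, Nat.mul_add_lt_mul hr hi⟩
    simp only [Fin.mk.injEq] at this
    rw [this]
    congr 1
    exact propext ⟨Nat.eq_and_eq_of_mul_add_eq (Nat.lt_succ_of_le hj) hi,
      by rintro ⟨rfl, rfl⟩; rfl⟩
  rw [blockAverage, real_inner_smul_right, inner_sum, Finset.sum_congr rfl hterm]
  by_cases hsr : s = r
  · simp [hsr, Nat.lt_succ_of_le hj]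
  · simp [hsr]

theorem isOrthogonalWithSqNorm_blockAverage
    (he : Orthonormal ℝ fun i : Fin (d * (m + 1)) => e i) :
    IsOrthogonalWithSqNorm (blockAverage e m) d ((m : ℝ) + 1)⁻¹ := by
  intro r hr s hs
  rw [blockAverage, real_inner_smul_left, sum_inner,
    Finset.sum_congr rfl fun i hi =>
      inner_blockAverage he hr (Nat.lt_succ_iff.1 (Finset.mem_range.1 hi)) hs]
  simp only [Finset.sum_const, Finset.card_range, nsmul_eq_mul]
  push_cast
  split_ifs <;> field_simp

theorem blockAverage_mem_orthogonal (he : Orthonormal ℝ fun i : Fin (d * (m + 1)) => e i)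
    {r : ℕ} (hr : r < d) :
    blockAverage e m r ∈ (Submodule.span ℝ (chainRoots e d m))ᗮ := by
  rw [Submodule.mem_orthogonal]
  intro v hv
  induction hv using Submodule.span_induction with
  | mem v hv =>
    obtain ⟨s, i, hs, hi, rfl⟩ := hv
    rw [inner_sub_left, inner_blockAverage he hs hi.le hr, add_assoc,
      inner_blockAverage he hs hi hr, sub_self]
  | zero => exact inner_zero_left _
  | add v w _ _ hv hw => rw [inner_add_left, hv, hw, add_zero]
  | smul a v _ hv => rw [real_inner_smul_left, hv, mul_zero]

theorem starProjection_orthogonal_span_chainRoots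
    (he : Orthonormal ℝ fun i : Fin (d * (m + 1)) => e i)
    [(Submodule.span ℝ (chainRoots e d m))ᗮ.HasOrthogonalProjection] {r i : ℕ} (hr : r < d)
    (hi : i ≤ m) :
    (Submodule.span ℝ (chainRoots e d m))ᗮ.starProjection (e (r * (m + 1) + i)) =
      blockAverage e m r :=
  Submodule.eq_starProjection_of_mem_orthogonal (blockAverage_mem_orthogonal he hr)
    (Submodule.le_orthogonal_orthogonal _ (sub_blockAverage_mem_span_chainRoots hr hi))

end Blocks

theorem stmt19_general (n d m : ℕ) (hm : 1 ≤ m) (hn : n = d * (m + 1)) :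
    ∀ (e : ℕ → EuclideanSpace ℝ (Fin n)),
    (∀ i, e i = if h : i < n then EuclideanSpace.single (⟨i, h⟩ : Fin n) 1 else 0) →
    ∀ (u : ℕ → EuclideanSpace ℝ (Fin n)),
    (∀ r, u r = ((m : ℝ) + 1)⁻¹ • ∑ i ∈ Finset.range (m + 1), e (r * (m + 1) + i)) →
    ∀ (Θ : Set (EuclideanSpace ℝ (Fin n))),
    Θ = {x | ∃ r i, r < d ∧ i < m ∧
      x = e (r * (m + 1) + i) - e (r * (m + 1) + i + 1)} →
    ∀ (Bn : Set (EuclideanSpace ℝ (Fin n))),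
    Bn = {x | (∃ i, i < n ∧ (x = e i ∨ x = -e i)) ∨
      (∃ i j, i < j ∧ j < n ∧
        (x = e i + e j ∨ x = e i - e j ∨ x = -e i + e j ∨ x = -e i - e j))} →
    ∀ (p : EuclideanSpace ℝ (Fin n) → EuclideanSpace ℝ (Fin n)),
    (∀ x, p x = (Submodule.orthogonalProjectionOnto ((Submodule.span ℝ Θ)ᗮ) x : EuclideanSpace ℝ (Fin n))) →
    ∀ (BC : Set (EuclideanSpace ℝ (Fin n))),
    BC = {x | (∃ r, r < d ∧ (x = u r ∨ x = -u r ∨ x = (2 : ℝ) • u r ∨ x = -((2 : ℝ) • u r))) ∨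
      (∃ r s, r < s ∧ s < d ∧
        (x = u r + u s ∨ x = u r - u s ∨ x = -u r + u s ∨ x = -u r - u s))} →
    BC ⊆ (p '' Bn) \ {0} ∧
    (∀ x ∈ BC, ∀ y ∈ BC, y - (2 * ⟪y, x⟫ / ⟪x, x⟫) • x ∈ BC) ∧
    (∀ x ∈ BC, ∀ y ∈ BC, ∃ z : ℤ, 2 * ⟪x, y⟫ / ⟪y, y⟫ = (z : ℝ)) ∧
    Module.finrank ℝ (Submodule.span ℝ BC) = d := by
  intro e he u hu Θ hΘ Bn hBn p hp BC hBC
  subst hn hΘ hBn hBC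
  obtain rfl : u = blockAverage e m := funext hu
  obtain rfl : p = (Submodule.span ℝ (chainRoots e d m))ᗮ.starProjection := funext hp
  have horth : Orthonormal ℝ fun i : Fin (d * (m + 1)) => e i := by
    convert EuclideanSpace.orthonormal_single (𝕜 := ℝ) (ι := Fin (d * (m + 1))) using 2 with i
    rw [he, dif_pos i.2]
  have hu := isOrthogonalWithSqNorm_blockAverage horth
  have hc : ((m : ℝ) + 1)⁻¹ ≠ 0 := by positivity
  refine ⟨fun x hx => ⟨?_, ne_zero_of_mem_bcRoots hu hc hx⟩, fun x hx y hy => ?_,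
    fun x hx y hy => exists_int_two_mul_inner_div_inner_self hu hc hx hy,
    finrank_span_bcRoots hu hc⟩
  · exact bcRoots_subset_image_bRoots hm _
      (fun r hr i hi => starProjection_orthogonal_span_chainRoots horth hr hi) hx
  · rw [← rootReflection_apply]
    exact mapsTo_rootReflection_bcRoots hu hc hx hy

/-- For B_n with Θ a union of d chains of simple roots of length m ≥ 1 (blocks of m+1
consecutive indices, consecutive blocks separated by one simple root not in Θ,
n = d(m+1), α_n ∉ Θ), the nonzero projections of the roots of B_n onto (span Θ)^⊥
contain the set {±uᵢ ± uⱼ (i<j), ±uᵢ, ±2uᵢ} of block averages, which is a non-reduced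
root system of type BC_d of rank d. -/
theorem stmt19 (n d m : ℕ) (hm : 1 ≤ m) (hd : 1 ≤ d) (hn : n = d * (m + 1)) :
    ∀ (e : ℕ → EuclideanSpace ℝ (Fin n)),
    (∀ i, e i = if h : i < n then EuclideanSpace.single (⟨i, h⟩ : Fin n) 1 else 0) →
    ∀ (u : ℕ → EuclideanSpace ℝ (Fin n)),
    (∀ r, u r = ((m : ℝ) + 1)⁻¹ • ∑ i ∈ Finset.range (m + 1), e (r * (m + 1) + i)) →
    ∀ (Θ : Set (EuclideanSpace ℝ (Fin n))),
    Θ = {x | ∃ r i, r < d ∧ i < m ∧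
      x = e (r * (m + 1) + i) - e (r * (m + 1) + i + 1)} →
    ∀ (Bn : Set (EuclideanSpace ℝ (Fin n))),
    Bn = {x | (∃ i, i < n ∧ (x = e i ∨ x = -e i)) ∨
      (∃ i j, i < j ∧ j < n ∧
        (x = e i + e j ∨ x = e i - e j ∨ x = -e i + e j ∨ x = -e i - e j))} →
    ∀ (p : EuclideanSpace ℝ (Fin n) → EuclideanSpace ℝ (Fin n)),
    (∀ x, p x = (Submodule.orthogonalProjectionOnto ((Submodule.span ℝ Θ)ᗮ) x : EuclideanSpace ℝ (Fin n))) →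
    ∀ (BC : Set (EuclideanSpace ℝ (Fin n))),
    BC = {x | (∃ r, r < d ∧ (x = u r ∨ x = -u r ∨ x = (2 : ℝ) • u r ∨ x = -((2 : ℝ) • u r))) ∨
      (∃ r s, r < s ∧ s < d ∧
        (x = u r + u s ∨ x = u r - u s ∨ x = -u r + u s ∨ x = -u r - u s))} →
    BC ⊆ (p '' Bn) \ {0} ∧
    (∀ x ∈ BC, ∀ y ∈ BC, y - (2 * ⟪y, x⟫ / ⟪x, x⟫) • x ∈ BC) ∧
    (∀ x ∈ BC, ∀ y ∈ BC, ∃ z : ℤ, 2 * ⟪x, y⟫ / ⟪y, y⟫ = (z : ℝ)) ∧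
    Module.finrank ℝ (Submodule.span ℝ BC) = d :=
  stmt19_general n d m hm hn
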